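/- Let ε ∈ (0,1), let X be uniform on {0,1}^n, and let Y be ε-correlated with X (each coordinate Y_i independently equals X_i with probability (1+ε)/2). Then for all f,g : {0,1}^n → ℝ≥0, E[f(X)g(Y)] ≤ |f|_{1+ε} · |g|_{1+ε}. -/

import Mathlib

open Finset Real

/-!
Induction on the dimension. Splitting off the first coordinate, the induction hypothesis bounds
`E[f(X)g(Y)]` by the one-coordinate form `((A+B)(C+D) + ρ(A-B)(C-D))/4` in the `p`-norms
`A, B` (resp. `C, D`) of the two halves of `f` (resp. `g`), and the `p`-norm of `f` is the
two-point `p`-norm of `(A, B)`. So everything reduces to the two-point case, which follows from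
Cauchy–Schwarz once `((a+b)/2)² + (p-1)((a-b)/2)² ≤ ‖(a,b)‖_p²`. Writing `a = s(1+u)`,
`b = s(1-u)`, this last inequality is `(1+(p-1)u²)^(p/2) ≤ ((1+u)^p + (1-u)^p)/2`: Bernoulli
bounds the left side by `1 + p(p-1)u²/2`, and two differentiations in `u` bound the right side
from below by the same quantity.
-/

lemma two_le_one_add_rpow_add_one_sub_rpow {r u : ℝ} (hr : r ≤ 0) (hu₀ : -1 < u) (hu₁ : u < 1) :
    2 ≤ (1 + u) ^ r + (1 - u) ^ r := by
  have hprod : 1 ≤ (1 + u) ^ r * (1 - u) ^ r := by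
    rw [← mul_rpow (by linarith) (by linarith)]
    exact one_le_rpow_of_pos_of_le_one_of_nonpos (by nlinarith) (by nlinarith [sq_nonneg u]) hr
  nlinarith [sq_nonneg ((1 + u) ^ r - (1 - u) ^ r), rpow_nonneg (by linarith : (0:ℝ) ≤ 1 + u) r,
    rpow_nonneg (by linarith : (0:ℝ) ≤ 1 - u) r]

lemma hasDerivAt_one_add_rpow (s : ℝ) {x : ℝ} (hx : -1 < x) :
    HasDerivAt (fun u : ℝ => (1 + u) ^ s) (s * (1 + x) ^ (s - 1)) x := by
  simpa using ((hasDerivAt_id' x).const_add 1).rpow_const (p := s) (Or.inl (by linarith))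

lemma hasDerivAt_one_sub_rpow (s : ℝ) {x : ℝ} (hx : x < 1) :
    HasDerivAt (fun u : ℝ => (1 - u) ^ s) (-(s * (1 - x) ^ (s - 1))) x := by
  simpa using ((hasDerivAt_id' x).const_sub 1).rpow_const (p := s) (Or.inl (by linarith))

lemma mul_le_one_add_rpow_sub_one_sub_rpow {q u : ℝ} (hq₀ : 0 ≤ q) (hq₁ : q ≤ 1)
    (hu : u ∈ Set.Icc (0:ℝ) 1) : 2 * q * u ≤ (1 + u) ^ q - (1 - u) ^ q := by
  let f : ℝ → ℝ := fun u => (1 + u) ^ q - (1 - u) ^ q - 2 * q * u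
  have hf : MonotoneOn f (Set.Icc 0 1) := by
    refine monotoneOn_of_hasDerivWithinAt_nonneg
      (f' := fun x => q * ((1 + x) ^ (q - 1) + (1 - x) ^ (q - 1) - 2))
      (convex_Icc 0 1) (by fun_prop (disch := exact Or.inr hq₀)) (fun x hx => ?_)
      (fun x hx => ?_)
    all_goals rw [interior_Icc] at hx
    · have := ((hasDerivAt_one_add_rpow q (by linarith [hx.1])).sub
        (hasDerivAt_one_sub_rpow q hx.2)).sub ((hasDerivAt_id' x).const_mul (2 * q))
      exact (this.congr_deriv (by ring)).hasDerivWithinAt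
    · have := two_le_one_add_rpow_add_one_sub_rpow (by linarith : q - 1 ≤ 0) (by linarith [hx.1])
        hx.2
      exact mul_nonneg hq₀ (by linarith)
  have := hf ⟨le_rfl, zero_le_one⟩ hu hu.1
  simp only [f, add_zero, sub_zero, one_rpow, sub_self, mul_zero, sub_nonneg] at this
  linarith

lemma two_add_mul_sq_le_one_add_rpow_add_one_sub_rpow {p u : ℝ} (hp₁ : 1 ≤ p) (hp₂ : p ≤ 2)
    (hu : u ∈ Set.Icc (0:ℝ) 1) : 2 + p * (p - 1) * u ^ 2 ≤ (1 + u) ^ p + (1 - u) ^ p := by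
  have hp₀ : 0 ≤ p := by linarith
  let f : ℝ → ℝ := fun u => (1 + u) ^ p + (1 - u) ^ p - p * (p - 1) * u ^ 2
  have hf : MonotoneOn f (Set.Icc 0 1) := by
    refine monotoneOn_of_hasDerivWithinAt_nonneg
      (f' := fun x => p * ((1 + x) ^ (p - 1) - (1 - x) ^ (p - 1) - 2 * (p - 1) * x))
      (convex_Icc 0 1) (by fun_prop (disch := exact Or.inr hp₀)) (fun x hx => ?_)
      (fun x hx => ?_)
    all_goals rw [interior_Icc] at hx
    · have := ((hasDerivAt_one_add_rpow p (by linarith [hx.1])).add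
        (hasDerivAt_one_sub_rpow p hx.2)).sub ((hasDerivAt_pow 2 x).const_mul (p * (p - 1)))
      exact (this.congr_deriv (by ring)).hasDerivWithinAt
    · have := mul_le_one_add_rpow_sub_one_sub_rpow (q := p - 1) (by linarith) (by linarith)
        (Set.Ioo_subset_Icc_self hx)
      exact mul_nonneg (by linarith) (by linarith)
  have := hf ⟨le_rfl, zero_le_one⟩ hu hu.1
  simp only [f, add_zero, sub_zero, one_rpow, ne_eq, OfNat.ofNat_ne_zero, not_false_eq_true,
    zero_pow, mul_zero] at this
  linarith

noncomputable def pairNorm (p a b : ℝ) : ℝ := ((a ^ p + b ^ p) / 2) ^ p⁻¹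

lemma pairNorm_comm (p a b : ℝ) : pairNorm p a b = pairNorm p b a := by
  rw [pairNorm, pairNorm, add_comm]

lemma pairNorm_nonneg {p a b : ℝ} (ha : 0 ≤ a) (hb : 0 ≤ b) : 0 ≤ pairNorm p a b := by
  unfold pairNorm; positivity

lemma pairNorm_rpow {p a b : ℝ} (hp : p ≠ 0) (ha : 0 ≤ a) (hb : 0 ≤ b) :
    pairNorm p a b ^ p = (a ^ p + b ^ p) / 2 :=
  rpow_inv_rpow (by positivity) hp

lemma sq_mul_le_pairNorm_sq {p s u : ℝ} (hp₁ : 1 ≤ p) (hp₂ : p ≤ 2) (hs : 0 ≤ s)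
    (hu : u ∈ Set.Icc (0:ℝ) 1) :
    s ^ 2 * (1 + (p - 1) * u ^ 2) ≤ pairNorm p (s * (1 + u)) (s * (1 - u)) ^ 2 := by
  have hpos : 0 ≤ 1 + u := by linarith [hu.1]
  have hneg : 0 ≤ 1 - u := by linarith [hu.2]
  have hmean : (1 + (p - 1) * u ^ 2) ^ (p / 2) ≤ ((1 + u) ^ p + (1 - u) ^ p) / 2 := by
    calc (1 + (p - 1) * u ^ 2) ^ (p / 2) ≤ 1 + p / 2 * ((p - 1) * u ^ 2) :=
          rpow_one_add_le_one_add_mul_self (by nlinarith) (by linarith) (by linarith)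
      _ ≤ ((1 + u) ^ p + (1 - u) ^ p) / 2 := by
          linarith [two_add_mul_sq_le_one_add_rpow_add_one_sub_rpow hp₁ hp₂ hu]
  rw [← rpow_le_rpow_iff (z := p / 2) (by positivity) (by positivity) (by positivity)]
  calc (s ^ 2 * (1 + (p - 1) * u ^ 2)) ^ (p / 2)
      = s ^ p * (1 + (p - 1) * u ^ 2) ^ (p / 2) := by
        rw [mul_rpow (by positivity) (by positivity), ← rpow_natCast_mul hs]
        congr 2
        push_cast
        ring
    _ ≤ s ^ p * (((1 + u) ^ p + (1 - u) ^ p) / 2) := by gcongr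
    _ = ((s * (1 + u)) ^ p + (s * (1 - u)) ^ p) / 2 := by
        rw [mul_rpow hs hpos, mul_rpow hs hneg]; ring
    _ = (pairNorm p (s * (1 + u)) (s * (1 - u)) ^ 2) ^ (p / 2) := by
        rw [← rpow_natCast_mul (pairNorm_nonneg (by positivity) (by positivity)),
          show ((2 : ℕ) : ℝ) * (p / 2) = p by push_cast; ring,
          pairNorm_rpow (by positivity) (by positivity) (by positivity)]

lemma sq_add_mul_sq_le_pairNorm_sq {p a b : ℝ} (hp₁ : 1 ≤ p) (hp₂ : p ≤ 2) (ha : 0 ≤ a)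
    (hb : 0 ≤ b) : ((a + b) / 2) ^ 2 + (p - 1) * ((a - b) / 2) ^ 2 ≤ pairNorm p a b ^ 2 := by
  wlog hba : b ≤ a generalizing a b
  · rw [pairNorm_comm]
    convert this hb ha (le_of_not_ge hba) using 1
    ring
  have hu : (a - b) / (a + b) ∈ Set.Icc (0:ℝ) 1 :=
    ⟨div_nonneg (by linarith) (by linarith), div_le_one_of_le₀ (by linarith) (by linarith)⟩
  have key := sq_mul_le_pairNorm_sq hp₁ hp₂ (by positivity : 0 ≤ (a + b) / 2) hu
  obtain hab | hab := (add_nonneg ha hb).eq_or_lt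
  · obtain ⟨rfl, rfl⟩ : a = 0 ∧ b = 0 := ⟨by linarith, by linarith⟩
    simpa using key
  convert key using 2
  · field_simp
  · congr 1 <;> field_simp <;> ring

lemma mul_add_mul_le_pairNorm_mul_pairNorm {p ρ a b c d : ℝ} (hp₂ : p ≤ 2) (hρ₀ : 0 ≤ ρ)
    (hρ : ρ ≤ p - 1) (ha : 0 ≤ a) (hb : 0 ≤ b) (hc : 0 ≤ c) (hd : 0 ≤ d) :
    ((a + b) * (c + d) + ρ * (a - b) * (c - d)) / 4 ≤ pairNorm p a b * pairNorm p c d := by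
  have hab : ((a + b) / 2) ^ 2 + ρ * ((a - b) / 2) ^ 2 ≤ pairNorm p a b ^ 2 :=
    le_trans (by gcongr) (sq_add_mul_sq_le_pairNorm_sq (by linarith) hp₂ ha hb)
  have hcd : ((c + d) / 2) ^ 2 + ρ * ((c - d) / 2) ^ 2 ≤ pairNorm p c d ^ 2 :=
    le_trans (by gcongr) (sq_add_mul_sq_le_pairNorm_sq (by linarith) hp₂ hc hd)
  refine le_of_sq_le_sq ?_ (mul_nonneg (pairNorm_nonneg ha hb) (pairNorm_nonneg hc hd))
  calc (((a + b) * (c + d) + ρ * (a - b) * (c - d)) / 4) ^ 2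
      ≤ (((a + b) / 2) ^ 2 + ρ * ((a - b) / 2) ^ 2)
          * (((c + d) / 2) ^ 2 + ρ * ((c - d) / 2) ^ 2) := by
        nlinarith [mul_nonneg hρ₀ (sq_nonneg ((a + b) * (c - d) - (a - b) * (c + d)))]
    _ ≤ pairNorm p a b ^ 2 * pairNorm p c d ^ 2 := by gcongr
    _ = (pairNorm p a b * pairNorm p c d) ^ 2 := by ring

noncomputable def cubeNorm (p : ℝ) {n : ℕ} (u : (Fin n → Bool) → ℝ) : ℝ :=
  (((2:ℝ) ^ n)⁻¹ * ∑ x, u x ^ p) ^ p⁻¹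

noncomputable def noiseWeight (ρ : ℝ) (b b' : Bool) : ℝ :=
  if b = b' then (1 + ρ) / 2 else (1 - ρ) / 2

noncomputable def correlatedExpectation (ρ : ℝ) {n : ℕ} (u v : (Fin n → Bool) → ℝ) : ℝ :=
  ∑ x, ∑ y, ((2:ℝ) ^ n)⁻¹ * (∏ i, noiseWeight ρ (x i) (y i)) * u x * v y

lemma noiseWeight_nonneg {ρ : ℝ} (h₀ : -1 ≤ ρ) (h₁ : ρ ≤ 1) (b b' : Bool) :
    0 ≤ noiseWeight ρ b b' := by
  unfold noiseWeight; split_ifs <;> linarith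

lemma sum_cube_succ {M : Type*} [AddCommMonoid M] {n : ℕ} (h : (Fin (n + 1) → Bool) → M) :
    ∑ x, h x = ∑ b, ∑ x : Fin n → Bool, h (Fin.cons b x) := by
  rw [← (Fin.consEquiv fun _ => Bool).sum_comp h, Fintype.sum_prod_type]
  rfl

lemma cubeNorm_nonneg (p : ℝ) {n : ℕ} {u : (Fin n → Bool) → ℝ} (hu : ∀ x, 0 ≤ u x) :
    0 ≤ cubeNorm p u :=
  rpow_nonneg (mul_nonneg (by positivity) (sum_nonneg fun x _ => rpow_nonneg (hu x) p)) _

lemma cubeNorm_zero {p : ℝ} (hp : p ≠ 0) {u : (Fin 0 → Bool) → ℝ} (hu : ∀ x, 0 ≤ u x)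
    (x : Fin 0 → Bool) : cubeNorm p u = u x := by
  rw [cubeNorm, Fintype.sum_subsingleton _ x, pow_zero, inv_one, one_mul,
    rpow_rpow_inv (hu x) hp]

lemma cubeNorm_succ {p : ℝ} (hp : p ≠ 0) {n : ℕ} {u : (Fin (n + 1) → Bool) → ℝ}
    (hu : ∀ x, 0 ≤ u x) :
    cubeNorm p u = pairNorm p (cubeNorm p fun x => u (Fin.cons true x))
      (cubeNorm p fun x => u (Fin.cons false x)) := by
  have hmean (b : Bool) : 0 ≤ ((2:ℝ) ^ n)⁻¹ * ∑ x : Fin n → Bool, u (Fin.cons b x) ^ p :=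
    mul_nonneg (by positivity) (sum_nonneg fun x _ => rpow_nonneg (hu _) p)
  rw [pairNorm, cubeNorm, cubeNorm, cubeNorm, rpow_inv_rpow (hmean true) hp,
    rpow_inv_rpow (hmean false) hp, sum_cube_succ, Fintype.sum_bool, pow_succ, mul_inv]
  ring_nf

lemma correlatedExpectation_zero (ρ : ℝ) (u v : (Fin 0 → Bool) → ℝ) (x : Fin 0 → Bool) :
    correlatedExpectation ρ u v = u x * v x := by
  simp only [correlatedExpectation, Fintype.sum_subsingleton _ x, pow_zero, inv_one, one_mul,
    univ_eq_empty, prod_empty]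

lemma correlatedExpectation_succ (ρ : ℝ) {n : ℕ} (u v : (Fin (n + 1) → Bool) → ℝ) :
    correlatedExpectation ρ u v = ∑ b, ∑ b', 2⁻¹ * noiseWeight ρ b b' *
      correlatedExpectation ρ (fun x => u (Fin.cons b x)) (fun y => v (Fin.cons b' y)) := by
  simp only [correlatedExpectation, sum_cube_succ, Fin.prod_univ_succ, Fin.cons_zero,
    Fin.cons_succ, Finset.mul_sum]
  refine sum_congr rfl fun b _ => ?_
  rw [sum_comm]
  refine sum_congr rfl fun b' _ => sum_congr rfl fun x _ => sum_congr rfl fun y _ => ?_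
  rw [pow_succ, mul_inv]
  ring

theorem correlatedExpectation_le_cubeNorm_mul_cubeNorm {p ρ : ℝ} (hp₂ : p ≤ 2) (hρ₀ : 0 ≤ ρ)
    (hρ : ρ ≤ p - 1) {n : ℕ} {u v : (Fin n → Bool) → ℝ} (hu : ∀ x, 0 ≤ u x)
    (hv : ∀ x, 0 ≤ v x) : correlatedExpectation ρ u v ≤ cubeNorm p u * cubeNorm p v := by
  have hp : p ≠ 0 := by linarith
  induction n with
  | zero =>
    rw [correlatedExpectation_zero ρ u v default, cubeNorm_zero hp hu default,
      cubeNorm_zero hp hv default]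
  | succ n ih =>
    set U := fun b x => u (Fin.cons b x)
    set V := fun b y => v (Fin.cons b y)
    calc correlatedExpectation ρ u v
        = ∑ b, ∑ b', 2⁻¹ * noiseWeight ρ b b' * correlatedExpectation ρ (U b) (V b') :=
          correlatedExpectation_succ ρ u v
      _ ≤ ∑ b, ∑ b', 2⁻¹ * noiseWeight ρ b b' * (cubeNorm p (U b) * cubeNorm p (V b')) := by
          gcongr with b _ b' _
          · exact mul_nonneg (by norm_num) (noiseWeight_nonneg (by linarith) (by linarith) b b')
          · exact ih (fun _ => hu _) (fun _ => hv _)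
      _ = ((cubeNorm p (U true) + cubeNorm p (U false))
              * (cubeNorm p (V true) + cubeNorm p (V false))
            + ρ * (cubeNorm p (U true) - cubeNorm p (U false))
              * (cubeNorm p (V true) - cubeNorm p (V false))) / 4 := by
          simp only [Fintype.sum_bool, noiseWeight, Bool.true_eq_false, Bool.false_eq_true,
            ↓reduceIte]
          ring
      _ ≤ cubeNorm p u * cubeNorm p v := by
          rw [cubeNorm_succ hp hu, cubeNorm_succ hp hv]
          exact mul_add_mul_le_pairNorm_mul_pairNorm hp₂ hρ₀ hρ (cubeNorm_nonneg p fun _ => hu _)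
            (cubeNorm_nonneg p fun _ => hu _) (cubeNorm_nonneg p fun _ => hv _)
            (cubeNorm_nonneg p fun _ => hv _)

/-- Two-function hypercontractivity: for an ε-correlated pair `(X,Y)` on the cube,
`E[f(X)g(Y)] ≤ |f|_{1+ε} |g|_{1+ε}`. -/
theorem two_function_hypercontractivity (n : ℕ) (ε : ℝ) (hε : ε ∈ Set.Ioo (0:ℝ) 1)
    (f g : (Fin n → Bool) → ℝ) (hf : ∀ x, 0 ≤ f x) (hg : ∀ x, 0 ≤ g x) :
    ∑ x : Fin n → Bool, ∑ y : Fin n → Bool,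
        ((2:ℝ)^n)⁻¹ * (∏ i, if x i = y i then (1+ε)/2 else (1-ε)/2) * f x * g y
      ≤ (((2:ℝ)^n)⁻¹ * ∑ x : Fin n → Bool, f x ^ (1+ε)) ^ ((1+ε)⁻¹)
        * (((2:ℝ)^n)⁻¹ * ∑ y : Fin n → Bool, g y ^ (1+ε)) ^ ((1+ε)⁻¹) :=
  correlatedExpectation_le_cubeNorm_mul_cubeNorm (p := 1 + ε) (by linarith [hε.2]) hε.1.le
    (by linarith) hf hg
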